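/- arXiv:2312.00908 — 2 statements merged into one kernel-verified Lean document; each statement's English description precedes it below -/
import Mathlib

section
/- Let g : ℝ^d → ℝ be a bounded measurable function, V¹ : ℝ^d → ℝ continuous nonnegative with V¹ = 0 exactly on the closure of an open set D, and X = (X_t) a continuous ℝ^d-valued stochastic process with X₀ ∈ D almost surely such that ℙ[τ_D ≥ T] > 0. Then E[g(X_T) | τ_D ≥ T] = lim_{n→∞} E[g(X_T) exp(-n ∫₀ᵀ V¹(X_s) ds)] / E[exp(-n ∫₀ᵀ V¹(X_s) ds)]. -/
open MeasureTheory Filter Set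

/-!
Write `I(ω) = ∫₀ᵀ V¹(X_s(ω)) ds ≥ 0`. Since `V¹` is continuous, nonnegative and vanishes exactly
on `closure D`, and paths are continuous, `I(ω) = 0` iff the path stays in `closure D` on `[0, T]`,
i.e. iff `ω ∈ S`. Hence `exp(-n I) → 1_S` pointwise, with `0 ≤ exp(-n I) ≤ 1`, and dominated
convergence gives the limits of numerator and denominator separately; the denominator's limit
`ℙ S` is positive.
-/

theorem intervalIntegral.integral_eq_zero_iff_of_continuousOn_nonneg {f : ℝ → ℝ} {a b : ℝ}
    (hab : a < b) (hf : ContinuousOn f (Icc a b)) (hf0 : ∀ x ∈ Icc a b, 0 ≤ f x) :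
    ∫ x in a..b, f x = 0 ↔ ∀ x ∈ Icc a b, f x = 0 := by
  refine ⟨fun h => ?_, fun h => ?_⟩
  · by_contra! hne
    obtain ⟨c, hc, hfc⟩ := hne
    exact (integral_pos hab hf (fun x hx => hf0 x (Ioc_subset_Icc_self hx))
      ⟨c, hc, (hf0 c hc).lt_of_ne' hfc⟩).ne' h
  · rw [integral_congr (g := fun _ => 0) (by rwa [uIcc_of_le hab.le]), integral_zero]

theorem measurable_intervalIntegral_of_continuous {Ω : Type*} [MeasurableSpace Ω]
    {F : ℝ → Ω → ℝ} (hcont : ∀ ω, Continuous (F · ω)) (hmeas : ∀ t, Measurable (F t))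
    (a b : ℝ) : Measurable fun ω => ∫ t in a..b, F t ω := by
  have hF : StronglyMeasurable fun p : Ω × ℝ => F p.2 p.1 :=
    ((measurable_uncurry_of_continuous_of_measurable hcont hmeas).comp
      measurable_swap).stronglyMeasurable
  exact ((hF.integral_prod_right' (ν := volume.restrict (Ioc a b))).sub
    (hF.integral_prod_right' (ν := volume.restrict (Ioc b a)))).measurable

theorem tendsto_exp_neg_nat_mul {x : ℝ} (hx : 0 ≤ x) :
    Tendsto (fun n : ℕ => Real.exp (-n * x)) atTop (nhds (if x = 0 then 1 else 0)) := by
  split_ifs with h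
  · simp [h]
  · have hmul := (tendsto_natCast_atTop_atTop (R := ℝ)).atTop_mul_const (hx.lt_of_ne' h)
    exact (Real.tendsto_exp_atBot.comp (tendsto_neg_atTop_atBot.comp hmul)).congr fun n => by
      simp [neg_mul]

theorem tendsto_integral_mul_exp_neg_nat_mul {Ω : Type*} [MeasurableSpace Ω] {μ : Measure Ω}
    [IsFiniteMeasure μ] {I h : Ω → ℝ} (hI : Measurable I) (hI0 : ∀ ω, 0 ≤ I ω)
    (hh : AEStronglyMeasurable h μ) {C : ℝ} (hC : ∀ᵐ ω ∂μ, |h ω| ≤ C) :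
    Tendsto (fun n : ℕ => ∫ ω, h ω * Real.exp (-n * I ω) ∂μ) atTop
      (nhds (∫ ω in I ⁻¹' {0}, h ω ∂μ)) := by
  rw [← integral_indicator (hI (measurableSet_singleton 0))]
  refine tendsto_integral_of_dominated_convergence (fun _ => C)
    (fun n => hh.mul (hI.const_mul _).exp.aestronglyMeasurable) (integrable_const C)
    (fun n => ?_) (ae_of_all _ fun ω => ?_)
  · filter_upwards [hC] with ω hω
    rw [Real.norm_eq_abs, abs_mul, Real.abs_exp]
    have hexp : Real.exp (-n * I ω) ≤ 1 :=
      Real.exp_le_one_iff.mpr (mul_nonpos_of_nonpos_of_nonneg (by simp) (hI0 ω))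
    nlinarith [abs_nonneg (h ω), Real.exp_pos (-n * I ω)]
  · convert (tendsto_exp_neg_nat_mul (hI0 ω)).const_mul (h ω) using 2
    by_cases hω : I ω = 0 <;> simp [indicator, hω]

theorem stmt_1_general (d : ℕ) {Ω : Type*} [MeasurableSpace Ω]
    (ℙ : Measure Ω) [IsProbabilityMeasure ℙ]
    (D : Set (EuclideanSpace ℝ (Fin d)))
    (V : EuclideanSpace ℝ (Fin d) → ℝ) (hVcont : Continuous V) (hVnn : ∀ x, 0 ≤ V x)
    (hV0 : ∀ x, V x = 0 ↔ x ∈ closure D)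
    (g : EuclideanSpace ℝ (Fin d) → ℝ) (hgm : Measurable g)
    (Cg : ℝ) (hgb : ∀ x, |g x| ≤ Cg)
    (T : ℝ) (hT : 0 < T)
    (X : ℝ → Ω → EuclideanSpace ℝ (Fin d)) (hXmeas : ∀ t, Measurable (X t))
    (hXcont : ∀ ω, Continuous fun t => X t ω)
    (S : Set Ω) (hS : S = {ω | ∀ s ∈ Icc (0:ℝ) T, X s ω ∈ closure D})
    (hSpos : 0 < ℙ S) :
    Tendsto (fun n : ℕ =>
        (∫ ω, g (X T ω) * Real.exp (-(n : ℝ) * ∫ s in (0:ℝ)..T, V (X s ω)) ∂ℙ) /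
          (∫ ω, Real.exp (-(n : ℝ) * ∫ s in (0:ℝ)..T, V (X s ω)) ∂ℙ))
      atTop
      (nhds ((∫ ω in S, g (X T ω) ∂ℙ) / (ℙ S).toReal)) := by
  set I : Ω → ℝ := fun ω => ∫ s in (0:ℝ)..T, V (X s ω)
  have hVX : ∀ ω, Continuous fun s => V (X s ω) := fun ω => hVcont.comp (hXcont ω)
  have hI : Measurable I := measurable_intervalIntegral_of_continuous hVX
    (fun t => hVcont.measurable.comp (hXmeas t)) 0 T
  have hI0 : ∀ ω, 0 ≤ I ω := fun ω =>
    intervalIntegral.integral_nonneg hT.le fun s _ => hVnn _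
  have hSI : S = I ⁻¹' {0} := by
    ext ω
    simp only [hS, mem_ofPred_eq, mem_preimage, mem_singleton_iff, I,
      intervalIntegral.integral_eq_zero_iff_of_continuousOn_nonneg hT (hVX ω).continuousOn
        fun s _ => hVnn _, hV0]
  have hnum := tendsto_integral_mul_exp_neg_nat_mul (μ := ℙ) hI hI0
    (hgm.comp (hXmeas T)).aestronglyMeasurable (ae_of_all _ fun ω => hgb (X T ω))
  have hden := tendsto_integral_mul_exp_neg_nat_mul (μ := ℙ) (h := 1) hI hI0
    aestronglyMeasurable_const (C := 1) (ae_of_all _ fun ω => by simp)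
  rw [← hSI] at hnum hden
  simp only [Pi.one_apply, one_mul, setIntegral_const, smul_eq_mul, mul_one,
    measureReal_def] at hden
  exact hnum.div hden (ENNReal.toReal_pos hSpos.ne' (measure_ne_top ℙ S)).ne'

/-- For a bounded measurable `g`, a continuous nonnegative potential `V¹`
vanishing exactly on the closure of a bounded open set `D`, and a continuous process `X`
starting in `D` a.s. with `ℙ[τ_D ≥ T] > 0` (where the event `{τ_D ≥ T}` is the event `S`
that the path stays in `closure D` on `[0,T]`), we have
`E[g(X_T) | τ_D ≥ T] = lim_n E[g(X_T) e^{-n ∫₀ᵀ V¹(X_s) ds}] / E[e^{-n ∫₀ᵀ V¹(X_s) ds}]`. -/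
theorem stmt_1 (d : ℕ) {Ω : Type*} [MeasurableSpace Ω]
    (ℙ : Measure Ω) [IsProbabilityMeasure ℙ]
    (D : Set (EuclideanSpace ℝ (Fin d))) (hDopen : IsOpen D)
    (hDbdd : Bornology.IsBounded D)
    (V : EuclideanSpace ℝ (Fin d) → ℝ) (hVcont : Continuous V) (hVnn : ∀ x, 0 ≤ V x)
    (hV0 : ∀ x, V x = 0 ↔ x ∈ closure D)
    (g : EuclideanSpace ℝ (Fin d) → ℝ) (hgm : Measurable g)
    (Cg : ℝ) (hgb : ∀ x, |g x| ≤ Cg)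
    (T : ℝ) (hT : 0 < T)
    (X : ℝ → Ω → EuclideanSpace ℝ (Fin d)) (hXmeas : ∀ t, Measurable (X t))
    (hXcont : ∀ ω, Continuous fun t => X t ω)
    (hX0 : ∀ᵐ ω ∂ℙ, X 0 ω ∈ D)
    (S : Set Ω) (hS : S = {ω | ∀ s ∈ Icc (0:ℝ) T, X s ω ∈ closure D})
    (hSpos : 0 < ℙ S) :
    Tendsto (fun n : ℕ =>
        (∫ ω, g (X T ω) * Real.exp (-(n : ℝ) * ∫ s in (0:ℝ)..T, V (X s ω)) ∂ℙ) /
          (∫ ω, Real.exp (-(n : ℝ) * ∫ s in (0:ℝ)..T, V (X s ω)) ∂ℙ))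
      atTop
      (nhds ((∫ ω in S, g (X T ω) ∂ℙ) / (ℙ S).toReal)) :=
  stmt_1_general d ℙ D V hVcont hVnn hV0 g hgm Cg hgb T hT X hXmeas hXcont S hS hSpos
end

section
/- Conversely, if (γ_t)_{0≤t≤T} is a flow of nonnegative finite measures solving ∂_t γ_t = ½ Δ γ_t − div(φ_t γ_t) − V γ_t with γ₀ a probability measure, 0 ≤ V ≤ 1 measurable, and γ_t(ℝ^d) > 0 for all t, then μ_t := γ_t / γ_t(ℝ^d) is a flow of probability measures solving ∂_t μ_t = ½ Δ μ_t − div(φ_t μ_t) − (V − ⟨μ_t,V⟩) μ_t in the sense of distributions, and γ_t(ℝ^d) = e^{−∫₀ᵗ ⟨μ_s,V⟩ ds}. -/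
/-!
Testing the equation for `γ` against `1` shows that the mass `M t = γ_t(ℝ^d)` solves
`M' = -∫ V dγ_t = -⟨μ_t, V⟩ M`, whence `M t = exp (-∫₀ᵗ ⟨μ_s, V⟩ ds)`. For a general test
function `ψ`, the quotient rule applied to `∫ ψ dμ_t = (∫ ψ dγ_t) / M t` produces exactly the
extra term `⟨μ_t, V⟩ ∫ ψ dμ_t` of the renormalized equation.
-/

open MeasureTheory Set
open scoped RealInnerProductSpace

/-- The Laplacian of `ψ : ℝ^d → ℝ`, as the trace of the second derivative. -/
noncomputable def lapl {d : ℕ} (ψ : EuclideanSpace ℝ (Fin d) → ℝ)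
    (x : EuclideanSpace ℝ (Fin d)) : ℝ :=
  ∑ i : Fin d,
    iteratedFDeriv ℝ 2 ψ x ![EuclideanSpace.single i 1, EuclideanSpace.single i 1]

lemma integrable_of_integral_sub_eq {α : Type*} [MeasurableSpace α] {ν : Measure α}
    {f g : α → ℝ} (hg : Integrable g ν) (hg0 : ∫ x, g x ∂ν ≠ 0)
    (hfg : ∫ x, (f x - g x) ∂ν = ∫ x, f x ∂ν - ∫ x, g x ∂ν) : Integrable f ν := by
  by_contra hf
  have hfg' : ¬ Integrable (fun x => f x - g x) ν := fun h' =>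
    hf ((h'.add hg).congr (.of_forall fun x => by simp))
  rw [integral_undef hf, integral_undef hfg'] at hfg
  exact hg0 (by linarith)

lemma eq_exp_neg_integral_of_hasDerivAt {M a : ℝ → ℝ} {t : ℝ} (ht : 0 ≤ t) (hM0 : M 0 = 1)
    (hpos : ∀ s ∈ Icc 0 t, 0 < M s) (hM : ∀ s ∈ Icc 0 t, HasDerivAt M (-(a s * M s)) s)
    (ha : ∀ s ∈ Icc 0 t, 0 ≤ a s) :
    M t = Real.exp (-∫ s in (0:ℝ)..t, a s) := by
  have hlog : ∀ s ∈ Icc 0 t, HasDerivAt (fun u => -Real.log (M u)) (a s) s := fun s hs => by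
    have h := ((hM s hs).log (hpos s hs).ne').fun_neg
    rwa [neg_div, neg_neg, mul_div_cancel_right₀ _ (hpos s hs).ne'] at h
  rw [← uIcc_of_le ht] at hlog ha
  have hIoo : Ioo (min 0 t) (max 0 t) ⊆ uIcc 0 t := Ioo_subset_Icc_self
  have hint : IntervalIntegrable a volume 0 t :=
    intervalIntegral.intervalIntegrable_deriv_of_nonneg
      (fun s hs => (hlog s hs).continuousAt.continuousWithinAt)
      (fun s hs => hlog s (hIoo hs)) (fun s hs => ha s (hIoo hs))
  rw [intervalIntegral.integral_eq_sub_of_hasDerivAt hlog hint, hM0, Real.log_one]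
  simp [Real.exp_log (hpos t ⟨ht, le_rfl⟩)]

section TestFunctions

variable {d : ℕ}

lemma lapl_const (c : ℝ) (x : EuclideanSpace ℝ (Fin d)) : lapl (fun _ => c) x = 0 := by
  simp [lapl, iteratedFDeriv_const_of_ne (by norm_num : (2 : ℕ) ≠ 0) c]

lemma lapl_add_const {ψ : EuclideanSpace ℝ (Fin d) → ℝ} (hψ : ContDiff ℝ 2 ψ) (c : ℝ)
    (x : EuclideanSpace ℝ (Fin d)) : lapl (fun y => ψ y + c) x = lapl ψ x := by
  refine Finset.sum_congr rfl fun i _ => ?_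
  rw [fun_iteratedFDeriv_add_apply hψ.contDiffAt contDiff_const.contDiffAt,
    iteratedFDeriv_const_of_ne (by norm_num) c]
  simp

lemma gradient_add_const (ψ : EuclideanSpace ℝ (Fin d) → ℝ) (c : ℝ)
    (x : EuclideanSpace ℝ (Fin d)) : gradient (fun y => ψ y + c) x = gradient ψ x := by
  simp only [gradient, fderiv_add_const]

def BoundedWithGradLapl (ψ : EuclideanSpace ℝ (Fin d) → ℝ) : Prop :=
  ∃ C, ∀ x, |ψ x| ≤ C ∧ ‖gradient ψ x‖ ≤ C ∧ |lapl ψ x| ≤ C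

lemma boundedWithGradLapl_const (c : ℝ) :
    BoundedWithGradLapl (fun _ : EuclideanSpace ℝ (Fin d) => c) :=
  ⟨|c|, fun x => ⟨le_rfl, by simp [gradient_fun_const], by simp [lapl_const]⟩⟩

lemma BoundedWithGradLapl.add_const {ψ : EuclideanSpace ℝ (Fin d) → ℝ}
    (hψ : ContDiff ℝ 2 ψ) (hb : BoundedWithGradLapl ψ) (c : ℝ) :
    BoundedWithGradLapl (fun y => ψ y + c) := by
  obtain ⟨C, hC⟩ := hb
  refine ⟨C + |c|, fun x => ⟨?_, ?_, ?_⟩⟩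
  · exact (abs_add_le _ _).trans (by linarith [(hC x).1])
  · rw [gradient_add_const]; linarith [(hC x).2.1, abs_nonneg c]
  · rw [lapl_add_const hψ]; linarith [(hC x).2.2, abs_nonneg c]

lemma BoundedWithGradLapl.integrable {ψ : EuclideanSpace ℝ (Fin d) → ℝ}
    (hψ : Continuous ψ) (hb : BoundedWithGradLapl ψ) (ν : Measure (EuclideanSpace ℝ (Fin d)))
    [IsFiniteMeasure ν] : Integrable ψ ν := by
  obtain ⟨C, hC⟩ := hb
  exact (integrable_const C).mono' hψ.aestronglyMeasurable
    (.of_forall fun x => (Real.norm_eq_abs _).trans_le (hC x).1)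

end TestFunctions

section FokkerPlanck

variable {d : ℕ}

noncomputable def fpkOp (φ : ℝ → EuclideanSpace ℝ (Fin d) → EuclideanSpace ℝ (Fin d)) (t : ℝ)
    (W ψ : EuclideanSpace ℝ (Fin d) → ℝ) (x : EuclideanSpace ℝ (Fin d)) : ℝ :=
  (1/2) * lapl ψ x + ⟪φ t x, gradient ψ x⟫ - W x * ψ x

variable {φ : ℝ → EuclideanSpace ℝ (Fin d) → EuclideanSpace ℝ (Fin d)} {t : ℝ}

lemma fpkOp_const (W : EuclideanSpace ℝ (Fin d) → ℝ) (c : ℝ) (x : EuclideanSpace ℝ (Fin d)) :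
    fpkOp φ t W (fun _ => c) x = -(W x * c) := by
  simp [fpkOp, lapl_const, gradient_fun_const]

lemma fpkOp_add_const (W : EuclideanSpace ℝ (Fin d) → ℝ) {ψ : EuclideanSpace ℝ (Fin d) → ℝ}
    (hψ : ContDiff ℝ 2 ψ) (c : ℝ) (x : EuclideanSpace ℝ (Fin d)) :
    fpkOp φ t W (fun y => ψ y + c) x = fpkOp φ t W ψ x - W x * c := by
  simp only [fpkOp, lapl_add_const hψ, gradient_add_const]
  ring

lemma fpkOp_sub_const (W ψ : EuclideanSpace ℝ (Fin d) → ℝ) (c : ℝ)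
    (x : EuclideanSpace ℝ (Fin d)) :
    fpkOp φ t (fun y => W y - c) ψ x = fpkOp φ t W ψ x + c * ψ x := by
  simp only [fpkOp]
  ring

/-- `γ` solves `∂_t γ = ½Δγ - div(φ_t γ) - Vγ` on `[0, T]` in the distributional sense. -/
def SolvesLinearFPK (T : ℝ) (φ : ℝ → EuclideanSpace ℝ (Fin d) → EuclideanSpace ℝ (Fin d))
    (V : EuclideanSpace ℝ (Fin d) → ℝ) (γ : ℝ → Measure (EuclideanSpace ℝ (Fin d))) : Prop :=
  ∀ ψ : EuclideanSpace ℝ (Fin d) → ℝ, ContDiff ℝ 2 ψ → BoundedWithGradLapl ψ →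
    ∀ t ∈ Icc (0:ℝ) T,
      HasDerivAt (fun s => ∫ x, ψ x ∂γ s) (∫ x, fpkOp φ t V ψ x ∂γ t) t

namespace SolvesLinearFPK

variable {T : ℝ} {V : EuclideanSpace ℝ (Fin d) → ℝ} {γ : ℝ → Measure (EuclideanSpace ℝ (Fin d))}

lemma hasDerivAt_mass (h : SolvesLinearFPK T φ V γ) (ht : t ∈ Icc 0 T) :
    HasDerivAt (fun s => (γ s).real univ) (-∫ x, V x ∂γ t) t := by
  have h1 := h _ contDiff_const (boundedWithGradLapl_const 1) t ht
  simpa only [fpkOp_const, mul_one, integral_neg, integral_const, smul_eq_mul] using h1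

/-- The drift `φ` is arbitrary, so `fpkOp φ t V ψ` need not be `γ_t`-integrable; testing
against `ψ + 1` still splits this integral. -/
lemma integral_fpkOp_sub (h : SolvesLinearFPK T φ V γ) [∀ s, IsFiniteMeasure (γ s)]
    {ψ : EuclideanSpace ℝ (Fin d) → ℝ} (hψ : ContDiff ℝ 2 ψ) (hb : BoundedWithGradLapl ψ)
    (ht : t ∈ Icc 0 T) :
    ∫ x, (fpkOp φ t V ψ x - V x) ∂γ t = ∫ x, fpkOp φ t V ψ x ∂γ t - ∫ x, V x ∂γ t := by
  have hshift := h _ (hψ.add contDiff_const) (hb.add_const hψ 1) t ht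
  have hsplit : (fun s => ∫ x, (ψ x + 1) ∂γ s) = fun s => ∫ x, ψ x ∂γ s + (γ s).real univ := by
    funext s
    rw [integral_add (hb.integrable hψ.continuous _) (integrable_const 1), integral_const,
      smul_eq_mul, mul_one]
  simp only [fpkOp_add_const V hψ, mul_one, hsplit] at hshift
  exact hshift.unique ((h ψ hψ hb t ht).add (h.hasDerivAt_mass ht))

theorem hasDerivAt_average (h : SolvesLinearFPK T φ V γ) [∀ s, IsFiniteMeasure (γ s)]
    {ψ : EuclideanSpace ℝ (Fin d) → ℝ} (hψ : ContDiff ℝ 2 ψ) (hb : BoundedWithGradLapl ψ)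
    (ht : t ∈ Icc 0 T) (hγt : γ t ≠ 0) (hV : Integrable V (γ t)) :
    HasDerivAt (fun s => ⨍ x, ψ x ∂γ s)
      (⨍ x, fpkOp φ t (fun y => V y - ⨍ z, V z ∂γ t) ψ x ∂γ t) t := by
  have : NeZero (γ t) := ⟨hγt⟩
  have hMt : (γ t).real univ ≠ 0 := measureReal_univ_ne_zero
  have hav : ∀ (f : EuclideanSpace ℝ (Fin d) → ℝ) s,
      ⨍ x, f x ∂γ s = (∫ x, f x ∂γ s) / (γ s).real univ := fun f s => by
    rw [average_eq, smul_eq_mul, inv_mul_eq_div]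
  have hlin : ∀ c, (c = 0 ∨ Integrable (fpkOp φ t V ψ) (γ t)) →
      ∫ x, fpkOp φ t (fun y => V y - c) ψ x ∂γ t
        = ∫ x, fpkOp φ t V ψ x ∂γ t + c * ∫ x, ψ x ∂γ t := by
    rintro c (rfl | hk)
    · simp
    · simp only [fpkOp_sub_const]
      rw [integral_add hk ((hb.integrable hψ.continuous _).const_mul _), integral_const_mul]
  have hVψ := hlin (⨍ z, V z ∂γ t) <| by
    rcases eq_or_ne (∫ x, V x ∂γ t) 0 with hB | hB
    · left; rw [hav, hB, zero_div]
    · exact .inr (integrable_of_integral_sub_eq hV hB (h.integral_fpkOp_sub hψ hb ht))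
  rw [funext (hav ψ), hav, hVψ, hav V]
  refine ((h ψ hψ hb t ht).div (h.hasDerivAt_mass ht) hMt).congr_deriv ?_
  field_simp
  ring

end SolvesLinearFPK

end FokkerPlanck

theorem stmt_9_general (d : ℕ) (T : ℝ)
    (V : EuclideanSpace ℝ (Fin d) → ℝ) (hVm : Measurable V)
    (hV : ∀ x, V x ∈ Icc (0:ℝ) 1)
    (φ : ℝ → EuclideanSpace ℝ (Fin d) → EuclideanSpace ℝ (Fin d))
    (γ : ℝ → Measure (EuclideanSpace ℝ (Fin d)))
    (hγfin : ∀ t, IsFiniteMeasure (γ t))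
    (hγ0 : IsProbabilityMeasure (γ 0))
    (hγpos : ∀ t ∈ Icc (0:ℝ) T, 0 < γ t univ)
    (hsol : ∀ ψ : EuclideanSpace ℝ (Fin d) → ℝ, ContDiff ℝ 2 ψ →
      (∃ C, ∀ x, |ψ x| ≤ C ∧ ‖gradient ψ x‖ ≤ C ∧ |lapl ψ x| ≤ C) →
      ∀ t ∈ Icc (0:ℝ) T,
        HasDerivAt (fun s => ∫ x, ψ x ∂γ s)
          (∫ x, ((1/2) * lapl ψ x + ⟪φ t x, gradient ψ x⟫ - V x * ψ x) ∂γ t) t)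
    (μ : ℝ → Measure (EuclideanSpace ℝ (Fin d)))
    (hμdef : ∀ t, μ t = (γ t univ)⁻¹ • γ t) :
    (∀ t ∈ Icc (0:ℝ) T, IsProbabilityMeasure (μ t)) ∧
    (∀ t ∈ Icc (0:ℝ) T,
      (γ t univ).toReal = Real.exp (-∫ s in (0:ℝ)..t, ∫ y, V y ∂μ s)) ∧
    (∀ ψ : EuclideanSpace ℝ (Fin d) → ℝ, ContDiff ℝ 2 ψ →
      (∃ C, ∀ x, |ψ x| ≤ C ∧ ‖gradient ψ x‖ ≤ C ∧ |lapl ψ x| ≤ C) →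
      ∀ t ∈ Icc (0:ℝ) T,
        HasDerivAt (fun s => ∫ x, ψ x ∂μ s)
          (∫ x, ((1/2) * lapl ψ x + ⟪φ t x, gradient ψ x⟫
            - (V x - ∫ y, V y ∂μ t) * ψ x) ∂μ t) t) := by
  obtain rfl : μ = fun t => (γ t univ)⁻¹ • γ t := funext hμdef
  have hFPK : SolvesLinearFPK T φ V γ := hsol
  have hγne : ∀ t ∈ Icc (0:ℝ) T, γ t ≠ 0 := fun t ht =>
    Measure.measure_univ_ne_zero.mp (hγpos t ht).ne'
  have hVint : ∀ t, Integrable V (γ t) := fun t =>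
    (integrable_const (1:ℝ)).mono' hVm.aestronglyMeasurable
      (.of_forall fun x => by simpa [abs_of_nonneg (hV x).1] using (hV x).2)
  refine ⟨fun t ht => ?_, fun t ht => ?_, fun ψ hψ hb t ht =>
    hFPK.hasDerivAt_average hψ hb ht (hγne t ht) (hVint t)⟩
  · have : NeZero (γ t) := ⟨hγne t ht⟩
    infer_instance
  · have hsub : Icc 0 t ⊆ Icc 0 T := Icc_subset_Icc_right ht.2
    refine eq_exp_neg_integral_of_hasDerivAt (M := fun s => (γ s).real univ)
      (a := fun s => ⨍ y, V y ∂γ s) ht.1 (by simp) (fun s hs => ?_) (fun s hs => ?_)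
      (fun s _ => integral_nonneg fun x => (hV x).1)
    · have : NeZero (γ s) := ⟨hγne s (hsub hs)⟩
      exact measureReal_univ_pos
    · refine (hFPK.hasDerivAt_mass (hsub hs)).congr_deriv ?_
      rw [← measure_smul_average, smul_eq_mul, mul_comm]

/-- If `(γ_t)` is a flow of nonnegative finite measures solving, in the
distributional sense (tested against `C²` functions bounded together with their gradients
and Laplacians, which includes constants), the linear equation
`∂_t γ = ½Δγ − div(φ_t γ) − Vγ` with `γ₀` a probability measure, `0 ≤ V ≤ 1`, and
`γ_t(ℝ^d) > 0`, then `μ_t := γ_t / γ_t(ℝ^d)` is a flow of probability measures solving the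
nonlinear (Gibbs) FPK equation `∂_t μ = ½Δμ − div(φ_t μ) − (V − ⟨μ_t,V⟩)μ`, and
`γ_t(ℝ^d) = e^{−∫₀ᵗ ⟨μ_s,V⟩ ds}`. -/
theorem stmt_9 (d : ℕ) (T : ℝ) (hT : 0 ≤ T)
    (V : EuclideanSpace ℝ (Fin d) → ℝ) (hVm : Measurable V)
    (hV : ∀ x, V x ∈ Icc (0:ℝ) 1)
    (φ : ℝ → EuclideanSpace ℝ (Fin d) → EuclideanSpace ℝ (Fin d))
    (γ : ℝ → Measure (EuclideanSpace ℝ (Fin d)))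
    (hγfin : ∀ t, IsFiniteMeasure (γ t))
    (hγ0 : IsProbabilityMeasure (γ 0))
    (hγpos : ∀ t ∈ Icc (0:ℝ) T, 0 < γ t univ)
    (hsol : ∀ ψ : EuclideanSpace ℝ (Fin d) → ℝ, ContDiff ℝ 2 ψ →
      (∃ C, ∀ x, |ψ x| ≤ C ∧ ‖gradient ψ x‖ ≤ C ∧ |lapl ψ x| ≤ C) →
      ∀ t ∈ Icc (0:ℝ) T,
        HasDerivAt (fun s => ∫ x, ψ x ∂γ s)
          (∫ x, ((1/2) * lapl ψ x + ⟪φ t x, gradient ψ x⟫ - V x * ψ x) ∂γ t) t)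
    (μ : ℝ → Measure (EuclideanSpace ℝ (Fin d)))
    (hμdef : ∀ t, μ t = (γ t univ)⁻¹ • γ t) :
    (∀ t ∈ Icc (0:ℝ) T, IsProbabilityMeasure (μ t)) ∧
    (∀ t ∈ Icc (0:ℝ) T,
      (γ t univ).toReal = Real.exp (-∫ s in (0:ℝ)..t, ∫ y, V y ∂μ s)) ∧
    (∀ ψ : EuclideanSpace ℝ (Fin d) → ℝ, ContDiff ℝ 2 ψ →
      (∃ C, ∀ x, |ψ x| ≤ C ∧ ‖gradient ψ x‖ ≤ C ∧ |lapl ψ x| ≤ C) →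
      ∀ t ∈ Icc (0:ℝ) T,
        HasDerivAt (fun s => ∫ x, ψ x ∂μ s)
          (∫ x, ((1/2) * lapl ψ x + ⟪φ t x, gradient ψ x⟫
            - (V x - ∫ y, V y ∂μ t) * ψ x) ∂μ t) t) :=
  stmt_9_general d T V hVm hV φ γ hγfin hγ0 hγpos hsol μ hμdef
end
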